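/- Let Φ be the non-selective measurement channel associated with a complete family of pairwise orthogonal projections {P_a} on ℂ^n, and let ρ be a positive definite quantum state on ℂ^n. Then Φ(ρ) is positive definite and the relative entropy between ρ and its measured state equals the entropy increase caused by the measurement: S(ρ‖Φ(ρ)) = S(Φ(ρ)) − S(ρ). -/

import Mathlib

/-! The projections `Pₐ` form a complete family of orthogonal idempotents, so `σ = ∑ₐ Pₐ ρ Pₐ`
commutes with every `Pₐ`, and therefore so does `log σ`. Cyclicity of the trace then gives
`Tr(σ log σ) = ∑ₐ Tr(ρ Pₐ log σ Pₐ) = Tr(ρ log σ)`, and both sides of the identity become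
`Tr(ρ log ρ) - Tr(σ log σ)`. Positivity of `σ` comes from `x† σ x = ∑ₐ (Pₐ x)† ρ (Pₐ x)`, where
some `Pₐ x` is nonzero because they sum to `x`. -/

open Matrix Kronecker
open scoped ComplexOrder

noncomputable section

variable {n : Type*} [Fintype n] [DecidableEq n]

/-- `|X| = (X† X)^{1/2}`, the positive semidefinite absolute value of a matrix. -/
def matAbs (X : Matrix n n ℂ) : Matrix n n ℂ :=
  (Matrix.posSemidef_conjTranspose_mul_self X).1.eigenvectorUnitary.1 *
    diagonal ((↑) ∘ (Real.sqrt ∘ (Matrix.posSemidef_conjTranspose_mul_self X).1.eigenvalues)) *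
    (star (Matrix.posSemidef_conjTranspose_mul_self X).1.eigenvectorUnitary : Matrix n n ℂ)

/-- `Tr |X|^p`, with the `p`-th power taken through the functional calculus. -/
def traceAbsPow (p : ℝ) (X : Matrix n n ℂ) : ℝ :=
  (Matrix.trace (cfc (fun x : ℝ => x ^ p) (matAbs X))).re

/-- The Schatten `p`-norm `‖X‖_p = (Tr |X|^p)^(1/p)`. -/
def schatten (p : ℝ) (X : Matrix n n ℂ) : ℝ :=
  (traceAbsPow p X) ^ (1 / p)

/-- Matrix square root via the functional calculus (agrees with the positive semidefinite
square root on positive semidefinite matrices). -/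
def msqrt (X : Matrix n n ℂ) : Matrix n n ℂ := cfc Real.sqrt X

/-- Matrix natural logarithm via the functional calculus. -/
def mlog (X : Matrix n n ℂ) : Matrix n n ℂ := cfc Real.log X

/-- Von Neumann entropy `S(ρ) = -Tr(ρ log ρ)`. -/
def vnEntropy (ρ : Matrix n n ℂ) : ℝ := -(Matrix.trace (ρ * mlog ρ)).re

/-- Relative entropy `S(ρ‖σ) = Tr(ρ log ρ) - Tr(ρ log σ)`. -/
def relEnt (ρ σ : Matrix n n ℂ) : ℝ :=
  (Matrix.trace (ρ * mlog ρ)).re - (Matrix.trace (ρ * mlog σ)).re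

/-- Uhlmann fidelity `F(ρ,σ) = (Tr|√σ √ρ|)²`. -/
def fidelity (ρ σ : Matrix n n ℂ) : ℝ :=
  ((Matrix.trace (matAbs (msqrt σ * msqrt ρ))).re) ^ 2

/-- Partial trace over the second factor. -/
def ptraceE {S E : Type*} [Fintype E] (Ω : Matrix (S × E) (S × E) ℂ) : Matrix S S ℂ :=
  Matrix.of fun s s' => ∑ e, Ω (s, e) (s', e)

/-- Partial trace over the first factor. -/
def ptraceS {S E : Type*} [Fintype S] (Ω : Matrix (S × E) (S × E) ℂ) : Matrix E E ℂ :=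
  Matrix.of fun e e' => ∑ s, Ω (s, e) (s, e')

open Finset

section Pinching

variable {R ι : Type*} [Semiring R] [Fintype ι] {e : ι → R}

theorem OrthogonalIdempotents.sum_mul_mul_self_mul (he : OrthogonalIdempotents e) (x : R)
    (b : ι) : (∑ a, e a * x * e a) * e b = e b * x * e b := by
  rw [sum_mul, sum_eq_single b (fun a _ hab => by rw [mul_assoc, he.ortho hab, mul_zero])
    (by simp), mul_assoc, (he.idem b).eq]

theorem OrthogonalIdempotents.mul_sum_mul_mul_self (he : OrthogonalIdempotents e) (x : R)
    (b : ι) : e b * (∑ a, e a * x * e a) = e b * x * e b := by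
  rw [mul_sum, sum_eq_single b
    (fun a _ hab => by rw [← mul_assoc, ← mul_assoc, he.ortho hab.symm, zero_mul, zero_mul])
    (by simp), ← mul_assoc, ← mul_assoc, (he.idem b).eq]

theorem OrthogonalIdempotents.commute_sum_mul_mul_self (he : OrthogonalIdempotents e) (x : R)
    (b : ι) : Commute (∑ a, e a * x * e a) (e b) :=
  (he.sum_mul_mul_self_mul x b).trans (he.mul_sum_mul_mul_self x b).symm

end Pinching

namespace Matrix

variable {ι : Type*} [Fintype ι]

theorem trace_sum_mul_mul_self_mul {R : Type*} [CommSemiring R] {e : ι → Matrix n n R}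
    (hidem : ∀ a, IsIdempotentElem (e a)) (hsum : ∑ a, e a = 1) {L : Matrix n n R}
    (hL : ∀ a, Commute L (e a)) (X : Matrix n n R) :
    trace ((∑ a, e a * X * e a) * L) = trace (X * L) := by
  have hterm : ∀ a, trace (e a * X * e a * L) = trace (X * (e a * L)) := fun a => by
    rw [mul_assoc, mul_assoc, trace_mul_comm, mul_assoc, mul_assoc, (hL a).eq, ← mul_assoc (e a),
      (hidem a).eq]
  rw [Finset.sum_mul, trace_sum]
  simp_rw [hterm]
  rw [← trace_sum, ← Finset.mul_sum, ← Finset.sum_mul, hsum, one_mul]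

theorem PosDef.sum_conjTranspose_mul_mul_same {𝕜 : Type*} [RCLike 𝕜] {ρ : Matrix n n 𝕜}
    (hρ : ρ.PosDef) {K : ι → Matrix n n 𝕜} (hK : ∑ a, K a = 1) :
    (∑ a, (K a)ᴴ * ρ * K a).PosDef := by
  refine .of_dotProduct_mulVec_pos ?_ fun x hx => ?_
  · exact isSelfAdjoint_sum _ fun a _ => isHermitian_conjTranspose_mul_mul (K a) hρ.1
  · have hterm : ∀ a, star x ⬝ᵥ ((K a)ᴴ * ρ * K a) *ᵥ x = star (K a *ᵥ x) ⬝ᵥ ρ *ᵥ (K a *ᵥ x) :=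
      fun a => by simp only [star_mulVec, dotProduct_mulVec, vecMul_vecMul, mul_assoc]
    obtain ⟨b, hb⟩ : ∃ b, K b *ᵥ x ≠ 0 := by
      by_contra! h
      apply hx
      rw [← one_mulVec x, ← hK, sum_mulVec, sum_eq_zero fun a _ => h a]
    rw [sum_mulVec, dotProduct_sum]
    simp_rw [hterm]
    exact sum_pos' (fun a _ => hρ.posSemidef.dotProduct_mulVec_nonneg _)
      ⟨b, mem_univ b, hρ.dotProduct_mulVec_pos hb⟩

end Matrix

theorem relEnt_measurement_eq_entropy_increase_general
    {n ι : Type*} [Fintype n] [DecidableEq n] [Fintype ι]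
    (P : ι → Matrix n n ℂ)
    (hherm : ∀ a, (P a)ᴴ = P a)
    (horth : ∀ a b, a ≠ b → P a * P b = 0)
    (hsum : ∑ a, P a = 1)
    (ρ : Matrix n n ℂ) (hρ : ρ.PosDef) :
    (∑ a, P a * ρ * P a).PosDef ∧
      relEnt ρ (∑ a, P a * ρ * P a)
        = vnEntropy (∑ a, P a * ρ * P a) - vnEntropy ρ := by
  have hP : CompleteOrthogonalIdempotents P :=
    CompleteOrthogonalIdempotents.iff_ortho_complete.2 ⟨fun a b => horth a b, hsum⟩
  refine ⟨by simpa only [hherm] using hρ.sum_conjTranspose_mul_mul_same hsum, ?_⟩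
  have hlog : ∀ a, Commute (mlog (∑ a, P a * ρ * P a)) (P a) := fun a =>
    (hP.commute_sum_mul_mul_self ρ a).cfc_real _
  have htrace := trace_sum_mul_mul_self_mul hP.idem hsum hlog ρ
  simp only [relEnt, vnEntropy, htrace]
  ring

/-- For a positive definite state `ρ`, the measured state `Φ(ρ)` is positive definite and
`S(ρ‖Φ(ρ)) = S(Φ(ρ)) - S(ρ)`. -/
theorem relEnt_measurement_eq_entropy_increase
    {n ι : Type*} [Fintype n] [DecidableEq n] [Fintype ι]
    (P : ι → Matrix n n ℂ)
    (hproj : ∀ a, P a * P a = P a)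
    (hherm : ∀ a, (P a)ᴴ = P a)
    (horth : ∀ a b, a ≠ b → P a * P b = 0)
    (hsum : ∑ a, P a = 1)
    (ρ : Matrix n n ℂ) (hρ : ρ.PosDef) (htr : ρ.trace = 1) :
    (∑ a, P a * ρ * P a).PosDef ∧
      relEnt ρ (∑ a, P a * ρ * P a)
        = vnEntropy (∑ a, P a * ρ * P a) - vnEntropy ρ :=
  relEnt_measurement_eq_entropy_increase_general P hherm horth hsum ρ hρ
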